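/- arXiv:2011.09769 — 2 statements merged into one kernel-verified Lean document; each statement's English description precedes it below -/
import Mathlib

section
/- The uncertainty set defined by a trained piecewise-affine neural network is a finite union of sets, each of which is a polyhedron (given by finitely many linear inequalities, some strict) intersected with a norm constraint of the form ‖Ac + γ − c̄‖ ≤ R for a matrix A and vector γ depending on the activation pattern. Formally, with U_f(W, c̄, R) = {c ∈ ℝ^N : ‖f(c) − c̄‖ ≤ R} for a network f with continuous piecewise affine activations, U_f(W, c̄, R) = ⋃_{u ∈ 𝒜} P(W, u, c̄, R), where 𝒜 is the finite set of activation patterns and P(W, u, c̄, R) is defined by the linear inequalities enforcing activation pattern u together with ‖W̃^{L+1} c + γ̃^{L+1} − c̄‖ ≤ R. -/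
open Matrix

/-- Output of layer `l` of the network (after the activation) on input `c`. -/
noncomputable def netPost (d : ℕ → ℕ) (W : ∀ l, Matrix (Fin (d (l + 1))) (Fin (d l)) ℝ)
    (σ : ℕ → ℝ → ℝ) (c : Fin (d 0) → ℝ) : ∀ l, Fin (d l) → ℝ
  | 0 => c
  | l + 1 => fun j => σ l ((W l).mulVec (netPost d W σ c l) j)

/-- Effective linear map `W̃` of the network up to layer `l` for activation pattern `u`. -/
noncomputable def effA (d : ℕ → ℕ) (W : ∀ l, Matrix (Fin (d (l + 1))) (Fin (d l)) ℝ)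
    (k : ℕ → ℕ) (α : ∀ l : ℕ, Fin (k l) → ℝ)
    (u : ∀ l : ℕ, Fin (d (l + 1)) → Fin (k l)) : ∀ l, Matrix (Fin (d l)) (Fin (d 0)) ℝ
  | 0 => 1
  | l + 1 => Matrix.diagonal (fun j => α l (u l j)) * (W l * effA d W k α u l)

/-- Effective affine offset `γ̃` of the network up to layer `l` for activation pattern `u`. -/
noncomputable def effb (d : ℕ → ℕ) (W : ∀ l, Matrix (Fin (d (l + 1))) (Fin (d l)) ℝ)
    (k : ℕ → ℕ) (α γ : ∀ l : ℕ, Fin (k l) → ℝ)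
    (u : ∀ l : ℕ, Fin (d (l + 1)) → Fin (k l)) : ∀ l, Fin (d l) → ℝ
  | 0 => 0
  | l + 1 => fun j => α l (u l j) * (W l).mulVec (effb d W k α γ u l) j + γ l (u l j)

/-- Extension of an activation pattern on the `L` layers to all of `ℕ`. -/
def extPat (d k : ℕ → ℕ) (L : ℕ) (hk : ∀ l, 0 < k l)
    (u : ∀ l : Fin L, Fin (d (l.1 + 1)) → Fin (k l.1)) :
    ∀ l : ℕ, Fin (d (l + 1)) → Fin (k l) :=
  fun l => if h : l < L then u ⟨l, h⟩ else fun _ => ⟨0, hk l⟩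

lemma exists_interval_aux {n : ℕ} (hn : 0 < n) (β : Fin (n + 1) → EReal)
    (hβ0 : β 0 = ⊥) (hβtop : β (Fin.last n) = ⊤) (w : ℝ) :
    ∃ i : Fin n, β i.castSucc ≤ (w : EReal) ∧ (w : EReal) < β i.succ := by
  classical
  set S : Finset (Fin n) := Finset.univ.filter (fun i => β i.castSucc ≤ (w : EReal)) with hS
  have hne : S.Nonempty := by
    refine ⟨⟨0, hn⟩, ?_⟩
    simp only [hS, Finset.mem_filter, Finset.mem_univ, true_and]
    have : (⟨0, hn⟩ : Fin n).castSucc = 0 := rfl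
    rw [this, hβ0]
    exact bot_le
  set i := S.max' hne with hi
  have hiS : i ∈ S := S.max'_mem hne
  have hile : β i.castSucc ≤ (w : EReal) := by
    simpa [hS, Finset.mem_filter] using hiS
  refine ⟨i, hile, ?_⟩
  by_contra hlt
  push_neg at hlt
  rcases lt_or_eq_of_le (Nat.succ_le_of_lt i.2) with h | h
  · -- i.1 + 1 < n, contradiction with maximality
    have hmem : (⟨i.1 + 1, h⟩ : Fin n) ∈ S := by
      simp only [hS, Finset.mem_filter, Finset.mem_univ, true_and]
      have : (⟨i.1 + 1, h⟩ : Fin n).castSucc = i.succ := rfl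
      rw [this]; exact hlt
    have := S.le_max' _ hmem
    rw [← hi] at this
    exact absurd this (by simp [Fin.lt_iff_val_lt_val, Fin.le_iff_val_le_val])
  · have : i.succ = Fin.last n := by
      ext; simpa using h
    rw [this, hβtop] at hlt
    exact absurd hlt (by simp)

lemma net_eq_eff (d : ℕ → ℕ) (W : ∀ l, Matrix (Fin (d (l + 1))) (Fin (d l)) ℝ)
    (k : ℕ → ℕ) (α γ : ∀ l : ℕ, Fin (k l) → ℝ)
    (β : ∀ l : ℕ, Fin (k l + 1) → EReal)
    (σ : ℕ → ℝ → ℝ)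
    (hσ : ∀ (l : ℕ) (i : Fin (k l)) (w : ℝ),
      β l i.castSucc ≤ (w : EReal) → (w : EReal) ≤ β l i.succ → σ l w = α l i * w + γ l i)
    (v : ∀ l : ℕ, Fin (d (l + 1)) → Fin (k l)) (c : Fin (d 0) → ℝ) (l : ℕ)
    (hv : ∀ m, m < l → ∀ j,
      β m (v m j).castSucc ≤
        (((W m).mulVec ((effA d W k α v m).mulVec c + effb d W k α γ v m) j : ℝ) : EReal) ∧
      (((W m).mulVec ((effA d W k α v m).mulVec c + effb d W k α γ v m) j : ℝ) : EReal) ≤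
        β m (v m j).succ) :
    netPost d W σ c l = (effA d W k α v l).mulVec c + effb d W k α γ v l := by
  induction l with
  | zero => simp [netPost, effA, effb, Matrix.one_mulVec]
  | succ l ih =>
    have he := ih (fun m hm j => hv m (Nat.lt_succ_of_lt hm) j)
    funext j
    have hw := hv l (Nat.lt_succ_self l) j
    simp only [netPost]
    rw [he, hσ l (v l j) _ hw.1 hw.2]
    simp only [effA, effb, Pi.add_apply, Matrix.mulVec_add, ← Matrix.mulVec_mulVec,
      Matrix.mulVec_diagonal]
    ring

/-- The neural-network uncertainty set `U_f(W, c̄, R) = {c : ‖f(c) − c̄‖ ≤ R}` is the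
finite union, over all activation patterns `u`, of the sets `P(W, u, c̄, R)` described by
the linear (in)equalities enforcing pattern `u` together with the norm constraint
`‖W̃^{L+1} c + γ̃^{L+1} − c̄‖ ≤ R`. -/
theorem uncertaintySet_eq_iUnion_patterns (d : ℕ → ℕ) (L : ℕ)
    (W : ∀ l, Matrix (Fin (d (l + 1))) (Fin (d l)) ℝ)
    (k : ℕ → ℕ) (hk : ∀ l, 0 < k l)
    (α γ : ∀ l : ℕ, Fin (k l) → ℝ)
    (β : ∀ l : ℕ, Fin (k l + 1) → EReal)
    (hβ0 : ∀ l, β l 0 = ⊥) (hβtop : ∀ l, β l (Fin.last (k l)) = ⊤)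
    (hβmono : ∀ l, Monotone (β l))
    (σ : ℕ → ℝ → ℝ)
    (hσ : ∀ (l : ℕ) (i : Fin (k l)) (w : ℝ),
      β l i.castSucc ≤ (w : EReal) → (w : EReal) ≤ β l i.succ → σ l w = α l i * w + γ l i)
    (nm : (Fin (d L) → ℝ) → ℝ) (cbar : Fin (d L) → ℝ) (R : ℝ) (hR : 0 < R) :
    {c : Fin (d 0) → ℝ | nm (netPost d W σ c L - cbar) ≤ R} =
      ⋃ u : ∀ l : Fin L, Fin (d (l.1 + 1)) → Fin (k l.1),
        {c : Fin (d 0) → ℝ |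
          (∀ (l : Fin L) (j : Fin (d (l.1 + 1))),
            β l.1 (u l j).castSucc ≤
              (((W l.1).mulVec ((effA d W k α (extPat d k L hk u) l.1).mulVec c +
                effb d W k α γ (extPat d k L hk u) l.1) j : ℝ) : EReal) ∧
            (((W l.1).mulVec ((effA d W k α (extPat d k L hk u) l.1).mulVec c +
                effb d W k α γ (extPat d k L hk u) l.1) j : ℝ) : EReal) <
              β l.1 (u l j).succ) ∧
          nm ((effA d W k α (extPat d k L hk u) L).mulVec c +
              effb d W k α γ (extPat d k L hk u) L - cbar) ≤ R} := by
  ext c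
  simp only [Set.mem_setOf_eq, Set.mem_iUnion]
  constructor
  · intro hc
    -- choose the pattern according to the actual pre-activation values
    have hch : ∀ l : Fin L, ∀ j : Fin (d (l.1 + 1)), ∃ i : Fin (k l.1),
        β l.1 i.castSucc ≤ (((W l.1).mulVec (netPost d W σ c l.1) j : ℝ) : EReal) ∧
        (((W l.1).mulVec (netPost d W σ c l.1) j : ℝ) : EReal) < β l.1 i.succ :=
      fun l j => exists_interval_aux (hk l.1) (β l.1) (hβ0 l.1) (hβtop l.1) _
    choose u hu1 hu2 using hch
    refine ⟨u, ?_⟩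
    set v := extPat d k L hk u with hv
    -- strong property: conditions hold below every l ≤ L
    have key : ∀ l, l ≤ L → ∀ m, (hm : m < l) → ∀ j,
        β m (v m j).castSucc ≤
          (((W m).mulVec ((effA d W k α v m).mulVec c + effb d W k α γ v m) j : ℝ) : EReal) ∧
        (((W m).mulVec ((effA d W k α v m).mulVec c + effb d W k α γ v m) j : ℝ) : EReal) <
          β m (v m j).succ := by
      intro l
      induction l with
      | zero => intro _ m hm; omega
      | succ l ih =>
        intro hlL m hm j
        rcases Nat.lt_or_ge m l with h | h
        · exact ih (Nat.le_of_succ_le hlL) m h j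
        · have hml : m = l := by omega
          subst hml
          have heq := net_eq_eff d W k α γ β σ hσ v c m
            (fun m' hm' j' => ⟨(ih (Nat.le_of_succ_le hlL) m' hm' j').1,
              le_of_lt (ih (Nat.le_of_succ_le hlL) m' hm' j').2⟩)
          have hmL : m < L := lt_of_lt_of_le hm hlL
          have hvm : v m = u ⟨m, hmL⟩ := by simp [hv, extPat, hmL]
          rw [← heq, hvm]
          exact ⟨hu1 ⟨m, hmL⟩ j, hu2 ⟨m, hmL⟩ j⟩
    have heqL := net_eq_eff d W k α γ β σ hσ v c L
      (fun m hm j => ⟨(key L le_rfl m hm j).1, le_of_lt (key L le_rfl m hm j).2⟩)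
    refine ⟨?_, by rw [← heqL]; exact hc⟩
    intro l j
    have := key L le_rfl l.1 l.2 j
    have hvl : v l.1 = u l := by simp [hv, extPat, l.2]
    rwa [hvl] at this
  · rintro ⟨u, hcond, hnorm⟩
    have heqL := net_eq_eff d W k α γ β σ hσ (extPat d k L hk u) c L ?_
    · rw [heqL]; exact hnorm
    · intro m hm j
      have h := hcond ⟨m, hm⟩ j
      have hvm : extPat d k L hk u m = u ⟨m, hm⟩ := by simp [extPat, hm]
      exact ⟨by simpa [hvm] using h.1, by simpa [hvm] using le_of_lt h.2⟩
end

section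
/- Binary linear equation systems are representable as zero level sets of a one-layer piecewise-affine network: let σ be the function with σ(x) = 0 iff x ∈ {0,1} and σ(x) > 0 otherwise (as defined piecewise: −x for x≤0, x for 0≤x≤1/2, −x+1 for 1/2≤x≤1, x−1 for x≥1), let A ∈ ℝ^{p×N}, b ∈ ℝ^p, and define g: ℝ^N → ℝ^{N+2p} by g(c) = (σ applied componentwise to (c, Ac − b, Ac − b + 𝟙)). Then {c ∈ ℝ^N : ‖g(c)‖₂ ≤ 0} = {c ∈ {0,1}^N : Ac = b}. -/
open Matrix

lemma sigma_zero_iff (σ : ℝ → ℝ)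
    (h1 : ∀ x : ℝ, x ≤ 0 → σ x = -x)
    (h2 : ∀ x : ℝ, 0 ≤ x → x ≤ 1 / 2 → σ x = x)
    (h3 : ∀ x : ℝ, 1 / 2 ≤ x → x ≤ 1 → σ x = -x + 1)
    (h4 : ∀ x : ℝ, 1 ≤ x → σ x = x - 1) (x : ℝ) :
    σ x = 0 ↔ x = 0 ∨ x = 1 := by
  constructor
  · intro h
    rcases le_total x 0 with hx | hx
    · left; have := h1 x hx; linarith [this ▸ h]
    rcases le_total x (1/2) with hx2 | hx2
    · left; have := h2 x hx hx2; linarith [this ▸ h]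
    rcases le_total x 1 with hx3 | hx3
    · right; have := h3 x hx2 hx3; linarith [this ▸ h]
    · right; have := h4 x hx3; linarith [this ▸ h]
  · rintro (rfl | rfl)
    · rw [h2 0 le_rfl (by norm_num)]
    · rw [h4 1 le_rfl]; norm_num

/-- Binary linear equation systems are zero level sets of a one-layer piecewise-affine
network: with `σ` the piecewise affine function vanishing exactly on `{0,1}`, and
`g(c) = σ(c, Ac − b, Ac − b + 𝟙)` componentwise, one has
`{c : ‖g(c)‖₂ ≤ 0} = {c ∈ {0,1}^N : Ac = b}`. -/
theorem binary_system_eq_zero_levelSet (N p : ℕ) (σ : ℝ → ℝ)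
    (h1 : ∀ x : ℝ, x ≤ 0 → σ x = -x)
    (h2 : ∀ x : ℝ, 0 ≤ x → x ≤ 1 / 2 → σ x = x)
    (h3 : ∀ x : ℝ, 1 / 2 ≤ x → x ≤ 1 → σ x = -x + 1)
    (h4 : ∀ x : ℝ, 1 ≤ x → σ x = x - 1)
    (A : Matrix (Fin p) (Fin N) ℝ) (b : Fin p → ℝ) :
    {c : Fin N → ℝ |
        Real.sqrt ((∑ j, (σ (c j)) ^ 2) + (∑ i, (σ (A.mulVec c i - b i)) ^ 2) +
          (∑ i, (σ (A.mulVec c i - b i + 1)) ^ 2)) ≤ 0} =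
      {c : Fin N → ℝ | (∀ j, c j = 0 ∨ c j = 1) ∧ A.mulVec c = b} := by
  have hz := sigma_zero_iff σ h1 h2 h3 h4
  ext c
  simp only [Set.mem_setOf_eq]
  constructor
  · intro h
    have hs1 : (0:ℝ) ≤ ∑ j, (σ (c j)) ^ 2 :=
      Finset.sum_nonneg fun j _ => sq_nonneg _
    have hs2 : (0:ℝ) ≤ ∑ i, (σ (A.mulVec c i - b i)) ^ 2 :=
      Finset.sum_nonneg fun i _ => sq_nonneg _
    have hs3 : (0:ℝ) ≤ ∑ i, (σ (A.mulVec c i - b i + 1)) ^ 2 :=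
      Finset.sum_nonneg fun i _ => sq_nonneg _
    have hsum : (∑ j, (σ (c j)) ^ 2) + (∑ i, (σ (A.mulVec c i - b i)) ^ 2) +
        (∑ i, (σ (A.mulVec c i - b i + 1)) ^ 2) = 0 := by
      by_contra hne
      have hpos : (0:ℝ) < _ := lt_of_le_of_ne (by linarith) (Ne.symm hne)
      have := Real.sqrt_pos.mpr hpos
      linarith
    have e1 : (∑ j, (σ (c j)) ^ 2) = 0 := by linarith
    have e2 : (∑ i, (σ (A.mulVec c i - b i)) ^ 2) = 0 := by linarith
    have e3 : (∑ i, (σ (A.mulVec c i - b i + 1)) ^ 2) = 0 := by linarith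
    have f1 : ∀ j, σ (c j) = 0 := by
      intro j
      have := (Finset.sum_eq_zero_iff_of_nonneg (fun j _ => sq_nonneg (σ (c j)))).mp e1 j
        (Finset.mem_univ j)
      exact pow_eq_zero_iff (by norm_num) |>.mp this
    have f2 : ∀ i, σ (A.mulVec c i - b i) = 0 := by
      intro i
      have := (Finset.sum_eq_zero_iff_of_nonneg
        (fun i _ => sq_nonneg (σ (A.mulVec c i - b i)))).mp e2 i (Finset.mem_univ i)
      exact pow_eq_zero_iff (by norm_num) |>.mp this
    have f3 : ∀ i, σ (A.mulVec c i - b i + 1) = 0 := by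
      intro i
      have := (Finset.sum_eq_zero_iff_of_nonneg
        (fun i _ => sq_nonneg (σ (A.mulVec c i - b i + 1)))).mp e3 i (Finset.mem_univ i)
      exact pow_eq_zero_iff (by norm_num) |>.mp this
    refine ⟨fun j => (hz _).mp (f1 j), ?_⟩
    funext i
    have g2 := (hz _).mp (f2 i)
    have g3 := (hz _).mp (f3 i)
    rcases g2 with g2 | g2 <;> rcases g3 with g3 | g3 <;> linarith
  · rintro ⟨hb, hA⟩
    have e1 : (∑ j, (σ (c j)) ^ 2) = 0 :=
      Finset.sum_eq_zero fun j _ => by rw [(hz _).mpr (hb j)]; ring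
    have e2 : (∑ i, (σ (A.mulVec c i - b i)) ^ 2) = 0 :=
      Finset.sum_eq_zero fun i _ => by
        rw [hA]; simp only [sub_self]; rw [(hz 0).mpr (Or.inl rfl)]; ring
    have e3 : (∑ i, (σ (A.mulVec c i - b i + 1)) ^ 2) = 0 :=
      Finset.sum_eq_zero fun i _ => by
        rw [hA]; simp only [sub_self, zero_add]; rw [(hz 1).mpr (Or.inr rfl)]; ring
    rw [e1, e2, e3]
    simp
end
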